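/- arXiv:1804.07104 — 2 statements merged into one kernel-verified Lean document; each statement's English description precedes it below -/
import Mathlib

section
/- For every n ≥ 2, every Hamiltonian prime set of the prime sum graph G_{2n} has at least 3 elements. That is, if H is a set of primes less than 4n such that the union over p in H of the edge sets E_p = { {u, v} : u, v ∈ {1,...,2n}, u ≠ v, u + v = p } contains a Hamilton cycle of G_{2n}, then |H| ≥ 3. -/
/-- The prime sum graph of order `m`: vertices are `{1, ..., m}`, and two distinct
vertices are adjacent iff their sum is prime. -/
def primeSumGraph (m : ℕ) : SimpleGraph (Finset.Icc 1 m) where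
  Adj i j := i ≠ j ∧ Nat.Prime (i.1 + j.1)
  symm := by
    refine ⟨?_⟩
    rintro i j ⟨h1, h2⟩
    exact ⟨h1.symm, by rwa [Nat.add_comm]⟩
  loopless := by refine ⟨?_⟩; rintro i ⟨h, _⟩; exact h rfl

/-!
The vertex `1` has two distinct neighbours on the Hamilton cycle, giving two distinct sums in `H`,
both at most `2n + 1`; the vertex `2n` likewise gives two distinct sums in `H`, both at least
`2n + 1`. Two elements cannot serve both pairs, since only `2n + 1` lies on both sides.
-/

namespace SimpleGraph.Walk

variable {V : Type*} {G : SimpleGraph V}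

lemma IsCycle.exists_ne_mem_edges {u v : V} {p : G.Walk u u} (hp : p.IsCycle)
    (hv : v ∈ p.support) :
    ∃ w₁ w₂, w₁ ≠ w₂ ∧ s(v, w₁) ∈ p.edges ∧ s(v, w₂) ∈ p.edges := by
  obtain ⟨w₁, w₂, hne, hnbr⟩ := Set.ncard_eq_two.mp (hp.ncard_neighborSet_toSubgraph_eq_two hv)
  have hw₁ : w₁ ∈ p.toSubgraph.neighborSet v := by rw [hnbr]; exact Set.mem_insert _ _
  have hw₂ : w₂ ∈ p.toSubgraph.neighborSet v := by rw [hnbr]; exact Set.mem_insert_of_mem _ rfl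
  exact ⟨w₁, w₂, hne, adj_toSubgraph_iff_mem_edges.mp hw₁, adj_toSubgraph_iff_mem_edges.mp hw₂⟩

end SimpleGraph.Walk

lemma Finset.three_le_card_of_pairs_le_ge {α : Type*} [LinearOrder α] {H : Finset α}
    {k x₁ x₂ y₁ y₂ : α} (hx : x₁ ≠ x₂) (hy : y₁ ≠ y₂)
    (hx₁ : x₁ ∈ H) (hx₂ : x₂ ∈ H) (hy₁ : y₁ ∈ H) (hy₂ : y₂ ∈ H)
    (hx₁k : x₁ ≤ k) (hx₂k : x₂ ≤ k) (hy₁k : k ≤ y₁) (hy₂k : k ≤ y₂) :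
    3 ≤ H.card := by
  by_contra! hcard
  have hH : H = {x₁, x₂} :=
    (eq_of_subset_of_card_le (insert_subset hx₁ (singleton_subset_iff.mpr hx₂))
      (by rw [card_pair hx]; omega)).symm
  have hle : ∀ y ∈ H, k ≤ y → y = k := by
    intro y hyH hky
    rw [hH, mem_insert, mem_singleton] at hyH
    rcases hyH with rfl | rfl <;> exact le_antisymm ‹_› hky
  exact hy ((hle y₁ hy₁ hy₁k).trans (hle y₂ hy₂ hy₂k).symm)

theorem hamiltonian_prime_set_card_ge_three_general (n : ℕ) (H : Finset ℕ)
    (hham : ∃ a, ∃ w : (primeSumGraph (2 * n)).Walk a a, w.IsHamiltonianCycle ∧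
      ∀ u v : Finset.Icc 1 (2 * n), s(u, v) ∈ w.edges → u.1 + v.1 ∈ H) :
    3 ≤ H.card := by
  obtain ⟨a, w, hw, hsum⟩ := hham
  have hn : 1 ≤ 2 * n := (Finset.mem_Icc.mp a.2).1.trans (Finset.mem_Icc.mp a.2).2
  let first : Finset.Icc 1 (2 * n) := ⟨1, Finset.mem_Icc.mpr ⟨le_rfl, hn⟩⟩
  let last : Finset.Icc 1 (2 * n) := ⟨2 * n, Finset.mem_Icc.mpr ⟨hn, le_rfl⟩⟩
  obtain ⟨x₁, x₂, hx, hx₁, hx₂⟩ := hw.isCycle.exists_ne_mem_edges (hw.mem_support first)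
  obtain ⟨y₁, y₂, hy, hy₁, hy₂⟩ := hw.isCycle.exists_ne_mem_edges (hw.mem_support last)
  refine Finset.three_le_card_of_pairs_le_ge (k := 2 * n + 1)
    (fun h ↦ hx (Subtype.ext (Nat.add_left_cancel h)))
    (fun h ↦ hy (Subtype.ext (Nat.add_left_cancel h)))
    (hsum _ _ hx₁) (hsum _ _ hx₂) (hsum _ _ hy₁) (hsum _ _ hy₂) ?_ ?_ ?_ ?_
  all_goals
    simp only [first, last]
    linarith [(Finset.mem_Icc.mp x₁.2).2, (Finset.mem_Icc.mp x₂.2).2,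
      (Finset.mem_Icc.mp y₁.2).1, (Finset.mem_Icc.mp y₂.2).1]

/-- Every Hamiltonian prime set of `G_{2n}` has at least 3 elements: if `H` is a
set of primes less than `4n` such that some Hamilton cycle of `G_{2n}` uses only
edges whose endpoint sums lie in `H`, then `|H| ≥ 3`. -/
theorem hamiltonian_prime_set_card_ge_three (n : ℕ) (hn : 2 ≤ n) (H : Finset ℕ)
    (hH : ∀ p ∈ H, Nat.Prime p ∧ p < 4 * n)
    (hham : ∃ a, ∃ w : (primeSumGraph (2 * n)).Walk a a, w.IsHamiltonianCycle ∧
      ∀ u v : Finset.Icc 1 (2 * n), s(u, v) ∈ w.edges → u.1 + v.1 ∈ H) :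
    3 ≤ H.card :=
  hamiltonian_prime_set_card_ge_three_general n H hham
end

section
/- If there are infinitely many primes p with p ≡ 1 (mod 12) such that p + 12 is also prime, then there are infinitely many positive integers n (namely n = (p − 11)/2 ranging over such primes p > 23) such that the prime sum graph G_{2n} contains a Hamilton cycle whose adjacent-vertex sums all lie in {11, 23, p, p + 12}. -/
open Function

namespace SimpleGraph

theorem exists_isHamiltonianCycle_of_bijective_of_adj_add_one {V : Type*} [DecidableEq V]
    {G : SimpleGraph V} {m : ℕ} (hm : 3 ≤ m) (f : ZMod m → V) (hf : Bijective f)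
    (hadj : ∀ x, G.Adj (f x) (f (x + 1))) :
    ∃ a, ∃ w : G.Walk a a, w.IsHamiltonianCycle ∧ ∀ e ∈ w.edges, ∃ x, e = s(f x, f (x + 1)) := by
  obtain ⟨k, rfl⟩ : ∃ k, m = k + 3 := ⟨m - 3, by omega⟩
  -- `ZMod (k + 3)` is `Fin (k + 3)`, the vertex type of `cycleGraph (k + 3)`.
  let φ : cycleGraph (k + 3) →g G :=
    ⟨f, fun {u v} h => by
      rcases cycleGraph_adj.mp h with h | h <;> rw [sub_eq_iff_eq_add'] at h <;> subst h
      exacts [(hadj v).symm, hadj u]⟩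
  have hcycle : (cycleGraph.cycle k).IsHamiltonianCycle :=
    Walk.isHamiltonianCycle_iff_isCycle_and_length_eq.mpr ⟨cycleGraph.isCycle_cycle, by simp⟩
  refine ⟨_, _, hcycle.map (f := φ) hf, fun e he => ?_⟩
  obtain ⟨e', he', rfl⟩ := List.mem_map.mp (Walk.edges_map φ _ ▸ he)
  induction e' using Sym2.inductionOn with | hf u v =>
  rcases cycleGraph_adj.mp (Walk.adj_of_mem_edges _ he') with h | h <;>
    rw [sub_eq_iff_eq_add'] at h <;> subst h
  exacts [⟨v, Sym2.eq_swap⟩, ⟨u, rfl⟩]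

end SimpleGraph

theorem Nat.eq_or_eq_add_of_natCast_eq {m s c : ℕ} (hs : s ≤ 2 * m) (hc : 0 < c) (hcm : c < m)
    (h : (s : ZMod m) = c) : s = c ∨ s = c + m := by
  rw [ZMod.natCast_eq_natCast_iff', Nat.mod_eq_of_lt hcm] at h
  have hdiv := Nat.div_add_mod s m
  have hq : s / m ≤ 2 := Nat.div_le_of_le_mul (by omega)
  interval_cases s / m <;> omega

namespace ZMod

variable {m : ℕ} [NeZero m]

/-- The representative of `x` in `{1, …, m}`; `0` is represented by `m`. -/
def toIcc (x : ZMod m) : Finset.Icc 1 m :=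
  ⟨(x - 1).val + 1, Finset.mem_Icc.mpr ⟨by omega, (x - 1).val_lt⟩⟩

@[simp]
theorem natCast_toIcc (x : ZMod m) : ((toIcc x : ℕ) : ZMod m) = x := by
  simp [toIcc]

theorem toIcc_bijective : Bijective (toIcc : ZMod m → Finset.Icc 1 m) := by
  refine (Fintype.bijective_iff_injective_and_card _).mpr ⟨fun x y h => ?_, by simp⟩
  rw [← natCast_toIcc x, ← natCast_toIcc y, h]

end ZMod

namespace PrimeSumGraph

def parity (n : ℕ) : ZMod (2 * n) →+* ZMod 2 := ZMod.castHom (dvd_mul_right 2 n) (ZMod 2)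

theorem parity_add_one (n : ℕ) (x : ZMod (2 * n)) : parity n (x + 1) = parity n x + 1 := by
  rw [map_add, map_one]

theorem eq_zero_of_six_mul_eq_zero {n : ℕ} (hn : Nat.Coprime 6 n) {d : ZMod (2 * n)}
    (h6 : 6 * d = 0) (h2 : parity n d = 0) : d = 0 := by
  have : NeZero (2 * n) := ⟨by rintro h; simp_all⟩
  rw [← ZMod.natCast_zmod_val d] at h6 h2 ⊢
  set k := d.val
  rw [map_natCast, ZMod.natCast_eq_zero_iff] at h2
  have h6 : 2 * n ∣ 2 * (3 * k) := by
    rw [← ZMod.natCast_eq_zero_iff]; push_cast; rw [← h6]; ring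
  have hk : n ∣ k := (Nat.Coprime.coprime_dvd_left (by norm_num) hn).symm.dvd_of_dvd_mul_left
    (Nat.dvd_of_mul_dvd_mul_left two_pos h6)
  exact (ZMod.natCast_eq_zero_iff _ _).mpr
    ((Nat.Coprime.coprime_dvd_left (by norm_num) hn).mul_dvd_of_dvd_of_dvd h2 hk)

def zigzag (n : ℕ) (x : ZMod (2 * n)) : ZMod (2 * n) :=
  if parity n x = 0 then 1 + 6 * x else 16 - 6 * x

theorem parity_zigzag (n : ℕ) (x : ZMod (2 * n)) : parity n (zigzag n x) = parity n x + 1 := by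
  rw [zigzag, apply_ite (parity n)]
  simp only [map_add, map_sub, map_mul, map_one, map_ofNat]
  generalize parity n x = a
  revert a; decide

theorem zigzag_add_zigzag_add_one (n : ℕ) (x : ZMod (2 * n)) :
    zigzag n x + zigzag n (x + 1) = if parity n x = 0 then 11 else 23 := by
  have hsucc := parity_add_one n x
  unfold zigzag
  by_cases h : parity n x = 0
  · rw [if_pos h, if_pos h, if_neg (by simp [hsucc, h])]; ring
  · have h1 : parity n (x + 1) = 0 := by
      rw [hsucc]; generalize parity n x = a at h; revert a; decide
    rw [if_neg h, if_neg h, if_pos h1]; ring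

theorem zigzag_injective {n : ℕ} (hn : Nat.Coprime 6 n) : Injective (zigzag n) := by
  intro x y hxy
  have hpar : parity n x = parity n y := by
    simpa [parity_zigzag] using congrArg (parity n) hxy
  have h6 : 6 * (x - y) = 0 := by
    unfold zigzag at hxy
    rw [hpar] at hxy
    split_ifs at hxy
    exacts [by linear_combination hxy, by linear_combination -hxy]
  exact sub_eq_zero.mp (eq_zero_of_six_mul_eq_zero hn h6 (by rw [map_sub, hpar, sub_self]))

theorem exists_isHamiltonianCycle {n : ℕ} (hn : Nat.Coprime 6 n) (h12 : 12 ≤ n)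
    (hp : (2 * n + 11).Prime) (hq : (2 * n + 23).Prime) :
    ∃ a, ∃ w : (primeSumGraph (2 * n)).Walk a a, w.IsHamiltonianCycle ∧
      ∀ u v : Finset.Icc 1 (2 * n), s(u, v) ∈ w.edges →
        u.1 + v.1 ∈ ({11, 23, 2 * n + 11, 2 * n + 23} : Set ℕ) := by
  have : NeZero (2 * n) := ⟨by omega⟩
  set f := ZMod.toIcc ∘ zigzag n
  have hf : Bijective f :=
    ZMod.toIcc_bijective.comp (Finite.injective_iff_bijective.mp (zigzag_injective hn))
  have hsum (x : ZMod (2 * n)) :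
      (f x : ℕ) + f (x + 1) ∈ ({11, 23, 2 * n + 11, 2 * n + 23} : Set ℕ) := by
    obtain ⟨c, hc, hcast⟩ : ∃ c : ℕ, (c = 11 ∨ c = 23) ∧
        (((f x : ℕ) + f (x + 1) : ℕ) : ZMod (2 * n)) = c :=
      ⟨if parity n x = 0 then 11 else 23, by split_ifs <;> simp, by
        push_cast; simp only [f, comp_apply, ZMod.natCast_toIcc, zigzag_add_zigzag_add_one]⟩
    have hbound : (f x : ℕ) + f (x + 1) ≤ 2 * (2 * n) := by
      have := Finset.mem_Icc.mp (f x).2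
      have := Finset.mem_Icc.mp (f (x + 1)).2
      omega
    rcases Nat.eq_or_eq_add_of_natCast_eq hbound (by omega) (by omega) hcast with h | h <;>
      rcases hc with rfl | rfl <;> simp [h, add_comm]
  have hadj (x : ZMod (2 * n)) : (primeSumGraph (2 * n)).Adj (f x) (f (x + 1)) := by
    refine ⟨hf.injective.ne fun h => ?_, ?_⟩
    · simpa [parity_add_one] using congrArg (parity n) h
    · rcases hsum x with h | h | h | h <;> rw [h]
      exacts [by norm_num, by norm_num, hp, hq]
  obtain ⟨a, w, hw, hedges⟩ :=
    SimpleGraph.exists_isHamiltonianCycle_of_bijective_of_adj_add_one (by omega) f hf hadj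
  refine ⟨a, w, hw, fun u v huv => ?_⟩
  obtain ⟨x, hx⟩ := hedges _ huv
  rcases Sym2.eq_iff.mp hx with ⟨rfl, rfl⟩ | ⟨rfl, rfl⟩
  exacts [hsum x, add_comm (f x : ℕ) _ ▸ hsum x]

end PrimeSumGraph

/-- If there are infinitely many primes `p ≡ 1 (mod 12)` with `p + 12` also prime,
then there are infinitely many positive integers `n` (namely `n = (p - 11)/2` for
such primes `p > 23`) such that `G_{2n}` contains a Hamilton cycle whose
adjacent-vertex sums all lie in `{11, 23, p, p + 12}`. -/
theorem infinitely_many_hamiltonian_of_primes_one_mod_twelve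
    (h : {p : ℕ | Nat.Prime p ∧ p % 12 = 1 ∧ Nat.Prime (p + 12)}.Infinite) :
    {n : ℕ | 0 < n ∧ ∃ p : ℕ, Nat.Prime p ∧ p % 12 = 1 ∧ Nat.Prime (p + 12) ∧
      23 < p ∧ n = (p - 11) / 2 ∧
      ∃ a, ∃ w : (primeSumGraph (2 * n)).Walk a a, w.IsHamiltonianCycle ∧
        ∀ u v : Finset.Icc 1 (2 * n), s(u, v) ∈ w.edges →
          u.1 + v.1 ∈ ({11, 23, p, p + 12} : Set ℕ)}.Infinite := by
  have hS : {p : ℕ | Nat.Prime p ∧ p % 12 = 1 ∧ Nat.Prime (p + 12) ∧ 23 < p}.Infinite :=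
    (h.sdiff (Set.finite_Iic 23)).mono <| by
      rintro p ⟨⟨hp, hp12, hq⟩, hp23⟩
      exact ⟨hp, hp12, hq, by simpa using hp23⟩
  have hinj : Set.InjOn (fun p => (p - 11) / 2)
      {p : ℕ | Nat.Prime p ∧ p % 12 = 1 ∧ Nat.Prime (p + 12) ∧ 23 < p} :=
    fun p ⟨_, hp12, _, hp23⟩ q ⟨_, hq12, _, hq23⟩ hpq => by simp only at hpq; omega
  refine (hS.image hinj).mono ?_
  rintro _ ⟨p, ⟨hp, hp12, hq, hp23⟩, rfl⟩
  have hp37 : 37 ≤ p := by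
    have : p ≠ 25 := by rintro rfl; norm_num at hp
    omega
  have hp_eq : 2 * ((p - 11) / 2) + 11 = p := by omega
  have hq_eq : 2 * ((p - 11) / 2) + 23 = p + 12 := by omega
  have hcop : Nat.Coprime 6 ((p - 11) / 2) := by
    rw [Nat.Coprime, Nat.gcd_rec, show (p - 11) / 2 % 6 = 1 by omega]; rfl
  obtain ⟨a, w, hw, hsum⟩ := PrimeSumGraph.exists_isHamiltonianCycle hcop (by omega)
    (by rwa [hp_eq]) (by rwa [hq_eq])
  dsimp only
  exact ⟨by omega, p, hp, hp12, hq, hp23, rfl, a, w, hw, by rwa [hp_eq, hq_eq] at hsum⟩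
end
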